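/- Suppose C is convex, MFCQ holds at every point of C, and F is μ-strongly monotone for some μ > 0. Then the projected monotone flow is contracting at rate μ on C: any two Carathéodory solutions x(t), y(t) remaining in C satisfy ‖x(t) − y(t)‖ ≤ e^{−μt}‖x(0) − y(0)‖ for all t ≥ 0. In particular, the unique solution x* ∈ SOL(F, C) satisfies ‖x(t) − x*‖ ≤ e^{−μt}‖x(0) − x*‖ along every Carathéodory solution in C, so x* is globally exponentially stable relative to C. -/

import Mathlib

open scoped RealInnerProductSpace BigOperators Topology
open Set Filter

noncomputable section

/-- The constraint set `C = {x | g(x) ≤ 0, Hx = c}`. -/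
def constraintSet {n m k : ℕ} (g : Fin m → EuclideanSpace ℝ (Fin n) → ℝ)
    (H : Fin k → EuclideanSpace ℝ (Fin n)) (c : Fin k → ℝ) :
    Set (EuclideanSpace ℝ (Fin n)) :=
  {x | (∀ i, g i x ≤ 0) ∧ ∀ j, ⟪H j, x⟫ = c j}

/-- Mangasarian–Fromovitz constraint qualification at `x`. -/
def MFCQat {n m k : ℕ} (g : Fin m → EuclideanSpace ℝ (Fin n) → ℝ)
    (H : Fin k → EuclideanSpace ℝ (Fin n)) (x : EuclideanSpace ℝ (Fin n)) : Prop :=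
  LinearIndependent ℝ H ∧
    ∃ ξ : EuclideanSpace ℝ (Fin n),
      (∀ i, g i x = 0 → ⟪gradient (g i) x, ξ⟫ < 0) ∧ ∀ j, ⟪H j, ξ⟫ = 0

/-- Solution set of the variational inequality `VI(F, C)`. -/
def SOL {n : ℕ} (F : EuclideanSpace ℝ (Fin n) → EuclideanSpace ℝ (Fin n))
    (C : Set (EuclideanSpace ℝ (Fin n))) : Set (EuclideanSpace ℝ (Fin n)) :=
  {xs | xs ∈ C ∧ ∀ x ∈ C, 0 ≤ ⟪x - xs, F xs⟫}

/-- Tangent cone of `C` at `x ∈ C` (valid parameterization under MFCQ). -/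
def tangentC {n m k : ℕ} (g : Fin m → EuclideanSpace ℝ (Fin n) → ℝ)
    (H : Fin k → EuclideanSpace ℝ (Fin n)) (x : EuclideanSpace ℝ (Fin n)) :
    Set (EuclideanSpace ℝ (Fin n)) :=
  {ξ | (∀ j, ⟪H j, ξ⟫ = 0) ∧ ∀ i, g i x = 0 → ⟪gradient (g i) x, ξ⟫ ≤ 0}

/-- The α-restricted tangent set. -/
def Talpha {n m k : ℕ} (g : Fin m → EuclideanSpace ℝ (Fin n) → ℝ)
    (H : Fin k → EuclideanSpace ℝ (Fin n)) (c : Fin k → ℝ) (α : ℝ)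
    (x : EuclideanSpace ℝ (Fin n)) : Set (EuclideanSpace ℝ (Fin n)) :=
  {ξ | (∀ i, ⟪gradient (g i) x, ξ⟫ ≤ -α * g i x) ∧
       ∀ j, ⟪H j, ξ⟫ = -α * (⟪H j, x⟫ - c j)}

/-- Closed-loop control-affine vector field `𝓕(x,u,v)`. -/
def Fcl {n m k : ℕ} (F : EuclideanSpace ℝ (Fin n) → EuclideanSpace ℝ (Fin n))
    (g : Fin m → EuclideanSpace ℝ (Fin n) → ℝ)
    (H : Fin k → EuclideanSpace ℝ (Fin n))
    (x : EuclideanSpace ℝ (Fin n)) (u : Fin m → ℝ) (v : Fin k → ℝ) :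
    EuclideanSpace ℝ (Fin n) :=
  -F x - ∑ i, u i • gradient (g i) x - ∑ j, v j • H j

/-- `p` is the Euclidean projection of `y` onto `K`. -/
def IsProjOn {n : ℕ} (K : Set (EuclideanSpace ℝ (Fin n)))
    (y p : EuclideanSpace ℝ (Fin n)) : Prop :=
  p ∈ K ∧ ∀ z ∈ K, ‖p - y‖ ≤ ‖z - y‖

/-- The CBF admissible input set `K_{cbf,α}(x)`. -/
def Kcbf {n m k : ℕ} (F : EuclideanSpace ℝ (Fin n) → EuclideanSpace ℝ (Fin n))
    (g : Fin m → EuclideanSpace ℝ (Fin n) → ℝ)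
    (H : Fin k → EuclideanSpace ℝ (Fin n)) (c : Fin k → ℝ) (α : ℝ)
    (x : EuclideanSpace ℝ (Fin n)) : Set ((Fin m → ℝ) × (Fin k → ℝ)) :=
  {p | (∀ i, 0 ≤ p.1 i) ∧
    (∀ i, ⟪gradient (g i) x, Fcl F g H x p.1 p.2⟫ ≤ -α * g i x) ∧
    ∀ j, ⟪H j, Fcl F g H x p.1 p.2⟫ = -α * (⟪H j, x⟫ - c j)}

/-- The objective `J(x,u,v) = ½‖Σᵢ uᵢ ∇gᵢ(x) + Σⱼ vⱼ ∇hⱼ(x)‖²`. -/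
def Jcost {n m k : ℕ} (g : Fin m → EuclideanSpace ℝ (Fin n) → ℝ)
    (H : Fin k → EuclideanSpace ℝ (Fin n))
    (x : EuclideanSpace ℝ (Fin n)) (p : (Fin m → ℝ) × (Fin k → ℝ)) : ℝ :=
  (1/2) * ‖(∑ i, p.1 i • gradient (g i) x) + ∑ j, p.2 j • H j‖ ^ 2


/-- A Carathéodory solution of `ẋ = 𝒢(x)` remaining in `C`, in integral form. -/
def CaraSol {n : ℕ} (𝒢 : EuclideanSpace ℝ (Fin n) → EuclideanSpace ℝ (Fin n))
    (C : Set (EuclideanSpace ℝ (Fin n))) (x : ℝ → EuclideanSpace ℝ (Fin n)) : Prop :=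
  Continuous x ∧ (∀ t ≥ (0:ℝ), x t ∈ C) ∧
    ∀ t ≥ (0:ℝ), x t = x 0 + ∫ s in (0:ℝ)..t, 𝒢 (x s)

open MeasureTheory

section Aux

variable {n m k : ℕ} {g : Fin m → EuclideanSpace ℝ (Fin n) → ℝ}
  {H : Fin k → EuclideanSpace ℝ (Fin n)} {c : Fin k → ℝ}
  {F 𝒢 : EuclideanSpace ℝ (Fin n) → EuclideanSpace ℝ (Fin n)}

lemma mem_constraintSet {x : EuclideanSpace ℝ (Fin n)} :
    x ∈ constraintSet g H c ↔ (∀ i, g i x ≤ 0) ∧ ∀ j, ⟪H j, x⟫ = c j := Iff.rfl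

lemma mem_tangentC {x ξ : EuclideanSpace ℝ (Fin n)} :
    ξ ∈ tangentC g H x ↔ (∀ j, ⟪H j, ξ⟫ = 0) ∧ ∀ i, g i x = 0 → ⟪gradient (g i) x, ξ⟫ ≤ 0 :=
  Iff.rfl

lemma tangentC_convex (x : EuclideanSpace ℝ (Fin n)) : Convex ℝ (tangentC g H x) := by
  intro ξ hξ η hη a b ha hb hab
  rw [mem_tangentC] at *
  constructor
  · intro j
    rw [inner_add_right, inner_smul_right, inner_smul_right, hξ.1 j, hη.1 j]
    ring
  · intro i hi
    rw [inner_add_right, inner_smul_right, inner_smul_right]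
    nlinarith [hξ.2 i hi, hη.2 i hi]

lemma tangentC_zero_mem (x : EuclideanSpace ℝ (Fin n)) :
    (0 : EuclideanSpace ℝ (Fin n)) ∈ tangentC g H x :=
  ⟨fun _ => inner_zero_right _, fun _ _ => le_of_eq (inner_zero_right _)⟩

lemma tangentC_smul_mem (x : EuclideanSpace ℝ (Fin n)) {t : ℝ} (ht : 0 ≤ t)
    {ξ : EuclideanSpace ℝ (Fin n)} (hξ : ξ ∈ tangentC g H x) : t • ξ ∈ tangentC g H x := by
  rw [mem_tangentC] at *
  constructor
  · intro j; rw [inner_smul_right, hξ.1 j, mul_zero]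
  · intro i hi
    rw [inner_smul_right]
    exact mul_nonpos_of_nonneg_of_nonpos ht (hξ.2 i hi)

lemma isProjOn_inner_le {K : Set (EuclideanSpace ℝ (Fin n))} (hK : Convex ℝ K)
    {y p : EuclideanSpace ℝ (Fin n)} (h : IsProjOn K y p) :
    ∀ z ∈ K, ⟪y - p, z - p⟫ ≤ 0 := by
  have hp := h.1
  haveI : Nonempty K := ⟨⟨p, hp⟩⟩
  have bdd : BddBelow (Set.range fun w : K => ‖y - (w : EuclideanSpace ℝ (Fin n))‖) := by
    refine ⟨0, ?_⟩
    rintro _ ⟨w, rfl⟩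
    exact norm_nonneg _
  have heq : ‖y - p‖ = ⨅ w : K, ‖y - w‖ := by
    apply le_antisymm
    · apply le_ciInf
      intro w
      simpa [norm_sub_rev] using h.2 w w.2
    · exact ciInf_le bdd (⟨p, hp⟩ : K)
  exact (norm_eq_iInf_iff_real_inner_le_zero hK hp).1 heq

lemma isProjOn_cone_inner {K : Set (EuclideanSpace ℝ (Fin n))} (hK : Convex ℝ K)
    (h0 : (0 : EuclideanSpace ℝ (Fin n)) ∈ K)
    (hcone : ∀ z ∈ K, (2:ℝ) • z ∈ K) {y p : EuclideanSpace ℝ (Fin n)} (h : IsProjOn K y p) :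
    ∀ z ∈ K, ⟪y - p, z⟫ ≤ 0 := by
  have hchar := isProjOn_inner_le hK h
  have h1 : ⟪y - p, p⟫ ≤ 0 := by
    have h2 := hchar ((2:ℝ) • p) (hcone p h.1)
    rw [two_smul] at h2
    simpa using h2
  have h2 : (0:ℝ) ≤ ⟪y - p, p⟫ := by
    have := hchar 0 h0
    simpa using this
  intro z hz
  have h3 := hchar z hz
  rw [inner_sub_right] at h3
  linarith [le_antisymm h1 h2]

/-- Subgradient inequality for a convex differentiable function. -/
lemma convexOn_inner_grad_le {f : EuclideanSpace ℝ (Fin n) → ℝ} (hf : ContDiff ℝ 1 f)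
    (hconv : ConvexOn ℝ Set.univ f) (a b : EuclideanSpace ℝ (Fin n)) :
    ⟪gradient f a, b - a⟫ ≤ f b - f a := by
  set φ : ℝ → ℝ := fun t => f (a + t • (b - a)) with hφ
  have hline : ∀ t : ℝ, HasDerivAt (fun s : ℝ => a + s • (b - a)) (b - a) t := by
    intro t
    simpa using ((hasDerivAt_id t).smul_const (b - a)).const_add a
  have hgrad : HasFDerivAt f (InnerProductSpace.toDual ℝ _ (gradient f a))
      ((fun s : ℝ => a + s • (b - a)) 0) := by
    simpa using ((hf.differentiable one_ne_zero a).hasGradientAt).hasFDerivAt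
  have hder : HasDerivAt φ ⟪gradient f a, b - a⟫ 0 := by
    have := hgrad.comp_hasDerivAt 0 (hline 0)
    simpa [InnerProductSpace.toDual_apply_apply, Function.comp_def, hφ] using this
  have hchord : ∀ t : ℝ, t ∈ Ioc (0:ℝ) 1 → φ t ≤ (1 - t) * φ 0 + t * φ 1 := by
    intro t ht
    have h := hconv.2 (Set.mem_univ a) (Set.mem_univ b)
      (show (0:ℝ) ≤ 1 - t by linarith [ht.2]) (le_of_lt ht.1) (by ring)
    have he : (1 - t) • a + t • b = a + t • (b - a) := by module
    rw [he] at h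
    have h0 : φ 0 = f a := by simp [hφ]
    have h1 : φ 1 = f b := by simp [hφ]
    simpa [hφ, h0, h1] using h
  have hslope : ∀ t : ℝ, t ∈ Ioc (0:ℝ) 1 → (φ t - φ 0) / t ≤ φ 1 - φ 0 := by
    intro t ht
    rw [div_le_iff₀ ht.1]
    nlinarith [hchord t ht]
  have hlim : Tendsto (fun t => (φ t - φ 0) / t) (𝓝[>] (0:ℝ)) (𝓝 ⟪gradient f a, b - a⟫) := by
    have h1 := hasDerivAt_iff_tendsto_slope.1 hder
    have h2 : 𝓝[>] (0:ℝ) ≤ 𝓝[≠] (0:ℝ) :=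
      nhdsWithin_mono 0 fun t ht => ne_of_gt ht
    refine (h1.mono_left h2).congr ?_
    intro t
    rw [slope_def_field, sub_zero]
  have hle : ⟪gradient f a, b - a⟫ ≤ φ 1 - φ 0 := by
    refine le_of_tendsto hlim ?_
    filter_upwards [Ioc_mem_nhdsGT_of_mem (by norm_num : (0:ℝ) ∈ Ico (0:ℝ) 1)] with t ht
    exact hslope t ht
  have h1 : φ 1 = f b := by simp [hφ]
  have h0 : φ 0 = f a := by simp [hφ]
  rw [h1, h0] at hle
  exact hle

lemma sub_mem_tangentC (hg : ∀ i, ContDiff ℝ 1 (g i))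
    (hgconv : ∀ i, ConvexOn ℝ Set.univ (g i))
    {a b : EuclideanSpace ℝ (Fin n)} (ha : a ∈ constraintSet g H c)
    (hb : b ∈ constraintSet g H c) : b - a ∈ tangentC g H a := by
  constructor
  · intro j
    rw [inner_sub_right, ha.2 j, hb.2 j, sub_self]
  · intro i hi
    have h := convexOn_inner_grad_le (hg i) (hgconv i) a b
    rw [hi] at h
    have := hb.1 i
    linarith

lemma Gnorm_le {z : EuclideanSpace ℝ (Fin n)}
    (h : IsProjOn (tangentC g H z) (-F z) (𝒢 z)) : ‖𝒢 z‖ ≤ 2 * ‖F z‖ := by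
  have h2 := h.2 0 (tangentC_zero_mem z)
  have h3 : ‖𝒢 z - -F z‖ ≤ ‖F z‖ := by simpa using h2
  calc ‖𝒢 z‖ = ‖(𝒢 z - -F z) + -F z‖ := by rw [sub_add_cancel]
    _ ≤ ‖𝒢 z - -F z‖ + ‖-F z‖ := norm_add_le _ _
    _ ≤ ‖F z‖ + ‖F z‖ := by rw [norm_neg]; exact add_le_add h3 le_rfl
    _ = 2 * ‖F z‖ := by ring

lemma key_mono (hg : ∀ i, ContDiff ℝ 1 (g i))
    (hgconv : ∀ i, ConvexOn ℝ Set.univ (g i))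
    {μ : ℝ}
    (hsmono : ∀ x y : EuclideanSpace ℝ (Fin n), μ * ‖x - y‖ ^ 2 ≤ ⟪x - y, F x - F y⟫)
    {a b : EuclideanSpace ℝ (Fin n)} (ha : a ∈ constraintSet g H c)
    (hb : b ∈ constraintSet g H c)
    (hpa : IsProjOn (tangentC g H a) (-F a) (𝒢 a))
    (hpb : IsProjOn (tangentC g H b) (-F b) (𝒢 b)) :
    ⟪a - b, 𝒢 a - 𝒢 b⟫ ≤ -(μ * ‖a - b‖ ^ 2) := by
  have hba : b - a ∈ tangentC g H a := sub_mem_tangentC hg hgconv ha hb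
  have hab : a - b ∈ tangentC g H b := sub_mem_tangentC hg hgconv hb ha
  have h1 : ⟪-F a - 𝒢 a, b - a⟫ ≤ 0 :=
    isProjOn_cone_inner (tangentC_convex a) (tangentC_zero_mem a)
      (fun z hz => tangentC_smul_mem a (by norm_num) hz) hpa _ hba
  have h2 : ⟪-F b - 𝒢 b, a - b⟫ ≤ 0 :=
    isProjOn_cone_inner (tangentC_convex b) (tangentC_zero_mem b)
      (fun z hz => tangentC_smul_mem b (by norm_num) hz) hpb _ hab
  have e1 : ⟪-F a - 𝒢 a, b - a⟫ = ⟪a - b, F a + 𝒢 a⟫ := by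
    rw [show -F a - 𝒢 a = -(F a + 𝒢 a) from by abel, show b - a = -(a - b) from by abel,
      inner_neg_neg, real_inner_comm]
  have e2 : ⟪-F b - 𝒢 b, a - b⟫ = -⟪a - b, F b + 𝒢 b⟫ := by
    rw [show -F b - 𝒢 b = -(F b + 𝒢 b) from by abel, inner_neg_left, real_inner_comm]
  rw [e1] at h1
  rw [e2] at h2
  rw [inner_add_right] at h1 h2
  have hs := hsmono a b
  rw [inner_sub_right] at hs ⊢
  linarith

end Aux

set_option maxHeartbeats 1000000 in
/-- Dini-derivative estimate used in the Grönwall argument. -/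
lemma dini_step {n : ℕ} {μ B : ℝ} (hμ : 0 < μ) (hB : 0 ≤ B)
    {u w : ℝ → EuclideanSpace ℝ (Fin n)} (hu : Continuous u) {τ : ℝ}
    (hint : ∀ z, τ ≤ z → z ≤ τ + 1 → IntervalIntegrable w volume τ z)
    (hwu : ∀ z, τ ≤ z → z ≤ τ + 1 → u z - u τ = ∫ s in τ..z, w s)
    (hwB : ∀ s ∈ Icc τ (τ + 1), ‖w s‖ ≤ B)
    (hmono : ∀ s ∈ Icc τ (τ + 1), ⟪u s, w s⟫ ≤ -(μ * ‖u s‖ ^ 2))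
    {r : ℝ} (hr : -(2 * μ) * ‖u τ‖ ^ 2 < r) :
    ∃ᶠ z in 𝓝[>] τ, (z - τ)⁻¹ * (‖u z‖ ^ 2 - ‖u τ‖ ^ 2) < r := by
  set V : ℝ → ℝ := fun s => ‖u s‖ ^ 2 with hV
  have hVc : Continuous V := (hu.norm).pow 2
  have hVτ : V τ = ‖u τ‖ ^ 2 := rfl
  obtain ⟨ε', hε', hrε'⟩ : ∃ e : ℝ, 0 < e ∧ r = -(2 * μ) * ‖u τ‖ ^ 2 + e :=
    ⟨r + 2 * μ * ‖u τ‖ ^ 2, by linarith, by ring⟩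
  set ε₁ : ℝ := ε' / (8 * (B + 1)) with hε₁def
  have hε₁ : 0 < ε₁ := by positivity
  set ε₂ : ℝ := ε' / (8 * (μ + 1)) with hε₂def
  have hε₂ : 0 < ε₂ := by positivity
  obtain ⟨δu, hδu, hδu'⟩ := Metric.continuous_iff.1 hu τ ε₁ hε₁
  obtain ⟨δv, hδv, hδv'⟩ := Metric.continuous_iff.1 hVc τ ε₂ hε₂
  set δ₃ : ℝ := min (min (δu / 2) (δv / 2)) (min (1 / 2) (ε' / (4 * (B ^ 2 + 1)))) with hδ₃def
  have hδ₃ : 0 < δ₃ := by positivity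
  have hev : ∀ᶠ z in 𝓝[>] τ, (z - τ)⁻¹ * (V z - V τ) < r := by
    filter_upwards [Ioc_mem_nhdsGT_of_mem (show τ ∈ Ico τ (τ + δ₃) from ⟨le_refl _, by linarith⟩)]
      with z hz
    have hz1 : τ < z := hz.1
    have hz2 : z ≤ τ + δ₃ := hz.2
    have hδ₃1 : δ₃ ≤ 1 / 2 := le_trans (min_le_right _ _) (min_le_left _ _)
    have hδ₃u : δ₃ ≤ δu / 2 := le_trans (min_le_left _ _) (min_le_left _ _)
    have hδ₃v : δ₃ ≤ δv / 2 := le_trans (min_le_left _ _) (min_le_right _ _)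
    have hδ₃e : δ₃ ≤ ε' / (4 * (B ^ 2 + 1)) := le_trans (min_le_right _ _) (min_le_right _ _)
    have hz3 : z ≤ τ + 1 := by linarith
    -- pointwise bounds on `Ioc τ z`
    set M : ℝ := -(μ * V τ) + μ * ε₂ + ε₁ * B with hM
    have hsub : ∀ s ∈ Ioc τ z, s ∈ Icc τ (τ + 1) := fun s hs => ⟨hs.1.le, by linarith [hs.2]⟩
    have hptw : ∀ s ∈ Ioc τ z, ⟪u τ, w s⟫ ≤ M := by
      intro s hs
      have hdist : dist s τ < δu ∧ dist s τ < δv := by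
        rw [Real.dist_eq, abs_of_nonneg (by linarith [hs.1.le] : (0:ℝ) ≤ s - τ)]
        constructor <;> linarith [hs.2]
      have b1 : ‖u s - u τ‖ ≤ ε₁ := by
        have := hδu' s hdist.1
        rw [dist_eq_norm] at this
        exact this.le
      have b2 : |V s - V τ| ≤ ε₂ := by
        have := hδv' s hdist.2
        rw [Real.dist_eq] at this
        exact this.le
      have e : ⟪u τ, w s⟫ = ⟪u s, w s⟫ + ⟪u τ - u s, w s⟫ := by
        rw [← inner_add_left]
        congr 1
        abel
      have hb1 : ⟪u τ - u s, w s⟫ ≤ ε₁ * B := by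
        calc ⟪u τ - u s, w s⟫ ≤ ‖u τ - u s‖ * ‖w s‖ := real_inner_le_norm _ _
          _ ≤ ε₁ * B := by
              apply mul_le_mul _ (hwB s (hsub s hs)) (norm_nonneg _) hε₁.le
              rw [norm_sub_rev]; exact b1
      have hb2 : ⟪u s, w s⟫ ≤ -(μ * V τ) + μ * ε₂ := by
        have h1 := hmono s (hsub s hs)
        have h2 : V τ - ε₂ ≤ V s := by
          have := abs_le.1 b2
          linarith [this.1]
        have : ‖u s‖ ^ 2 = V s := rfl
        nlinarith [h1, h2, hμ.le]
      rw [e, hM]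
      linarith
    have hIoc : IntegrableOn w (Ioc τ z) volume :=
      (intervalIntegrable_iff_integrableOn_Ioc_of_le hz1.le).1 (hint z hz1.le hz3)
    have hip : ⟪u τ, u z - u τ⟫ = ∫ s in Ioc τ z, ⟪u τ, w s⟫ := by
      rw [hwu z hz1.le hz3, intervalIntegral.integral_of_le hz1.le]
      exact (integral_inner hIoc (u τ)).symm
    have hintM : ∫ s in Ioc τ z, ⟪u τ, w s⟫ ≤ (z - τ) * M := by
      have h1 : ∫ s in Ioc τ z, ⟪u τ, w s⟫ ≤ ∫ _ in Ioc τ z, M :=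
        setIntegral_mono_on (hIoc.const_inner _)
          (integrableOn_const (by rw [Real.volume_Ioc]; exact ENNReal.ofReal_ne_top))
          measurableSet_Ioc hptw
      have h2 : ∫ _ in Ioc τ z, M = (z - τ) * M := by
        rw [setIntegral_const, Real.volume_real_Ioc_of_le hz1.le,
          smul_eq_mul]
      linarith [h1, h2.le, h2.ge]
    have hnormW : ‖u z - u τ‖ ≤ B * (z - τ) := by
      rw [hwu z hz1.le hz3]
      have := intervalIntegral.norm_integral_le_of_norm_le_const (C := B) (f := w) (a := τ) (b := z)
        (fun s hs => by
          rw [uIoc_of_le hz1.le] at hs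
          exact hwB s (hsub s hs))
      rwa [abs_of_nonneg (by linarith : (0:ℝ) ≤ z - τ)] at this
    have hexp : V z - V τ = 2 * ⟪u τ, u z - u τ⟫ + ‖u z - u τ‖ ^ 2 := by
      have h := norm_add_sq_real (u τ) (u z - u τ)
      have h2 : u τ + (u z - u τ) = u z := by abel
      rw [h2] at h
      simp only [hV]
      linarith
    have hcmb : V z - V τ ≤ 2 * ((z - τ) * M) + (B * (z - τ)) ^ 2 := by
      have hsq : ‖u z - u τ‖ ^ 2 ≤ (B * (z - τ)) ^ 2 :=
        pow_le_pow_left₀ (norm_nonneg _) hnormW 2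
      rw [hexp]
      have := hip ▸ hintM
      linarith [this]
    have hzτ : (0:ℝ) < z - τ := by linarith
    have hstep : (z - τ)⁻¹ * (V z - V τ) ≤ 2 * M + B ^ 2 * (z - τ) := by
      have h1 : (z - τ)⁻¹ * (V z - V τ) ≤ (z - τ)⁻¹ * (2 * ((z - τ) * M) + (B * (z - τ)) ^ 2) :=
        mul_le_mul_of_nonneg_left hcmb (by positivity)
      have h2 : (z - τ)⁻¹ * (2 * ((z - τ) * M) + (B * (z - τ)) ^ 2) = 2 * M + B ^ 2 * (z - τ) := by
        field_simp
      linarith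
    -- smallness of the error terms
    have k1 : 2 * μ * ε₂ ≤ ε' / 4 := by
      rw [hε₂def, ← mul_div_assoc, div_le_div_iff₀ (by positivity) (by norm_num)]
      nlinarith [hε'.le, hμ.le]
    have k2 : 2 * (ε₁ * B) ≤ ε' / 4 := by
      rw [hε₁def, div_mul_eq_mul_div, ← mul_div_assoc, div_le_div_iff₀ (by positivity) (by norm_num)]
      nlinarith [hε'.le, hB]
    have k3 : B ^ 2 * (z - τ) ≤ ε' / 4 := by
      have h1 : B ^ 2 * (z - τ) ≤ B ^ 2 * (ε' / (4 * (B ^ 2 + 1))) := by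
        apply mul_le_mul_of_nonneg_left _ (by positivity)
        linarith
      have h2 : B ^ 2 * (ε' / (4 * (B ^ 2 + 1))) ≤ ε' / 4 := by
        rw [← mul_div_assoc, div_le_div_iff₀ (by positivity) (by norm_num)]
        nlinarith [hε'.le, sq_nonneg B]
      linarith
    have hfin : 2 * M + B ^ 2 * (z - τ) < r := by
      rw [hM, hrε', ← hVτ]
      linarith [k1, k2, k3, hε']
    linarith [hstep]
  exact hev.frequently


set_option maxHeartbeats 1000000 in
/-- Bootstrap: a Carathéodory solution with locally bounded right-hand side has a locally
interval-integrable right-hand side. -/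
lemma caraSol_intInt {n : ℕ} {𝒢 : EuclideanSpace ℝ (Fin n) → EuclideanSpace ℝ (Fin n)}
    {x : ℝ → EuclideanSpace ℝ (Fin n)}
    (hxeq : ∀ t ≥ (0:ℝ), x t = x 0 + ∫ s in (0:ℝ)..t, 𝒢 (x s))
    (hbnd : ∀ T : ℝ, 0 ≤ T → ∃ B, ∀ s ∈ Icc (0:ℝ) T, ‖𝒢 (x s)‖ ≤ B) :
    ∀ b, 0 ≤ b → IntervalIntegrable (fun s => 𝒢 (x s)) volume 0 b := by
  set f : ℝ → EuclideanSpace ℝ (Fin n) := fun s => 𝒢 (x s) with hf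
  by_contra hcon
  push_neg at hcon
  obtain ⟨b₀, hb₀, hnint⟩ := hcon
  set S : Set ℝ := {t : ℝ | 0 ≤ t ∧ IntervalIntegrable f volume 0 t} with hS
  have hS0 : (0:ℝ) ∈ S := ⟨le_refl _, IntervalIntegrable.refl⟩
  have hSne : S.Nonempty := ⟨0, hS0⟩
  have hSb : ∀ t ∈ S, t ≤ b₀ := by
    intro t ht
    by_contra hlt
    push_neg at hlt
    exact hnint (ht.2.mono_set
      (by rw [uIcc_of_le hb₀, uIcc_of_le ht.1]; exact Icc_subset_Icc le_rfl hlt.le))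
  have hbdd : BddAbove S := ⟨b₀, hSb⟩
  set T₁ : ℝ := sSup S with hT₁
  have hT₁0 : 0 ≤ T₁ := le_csSup hbdd hS0
  have hgt : ∀ t, T₁ < t → ¬IntervalIntegrable f volume 0 t := by
    intro t ht hi
    exact absurd (le_csSup hbdd ⟨hT₁0.trans ht.le, hi⟩) (not_le.2 ht)
  have hconst : ∀ t, T₁ < t → x t = x 0 := by
    intro t ht
    have h1 := hxeq t (hT₁0.trans ht.le)
    rw [intervalIntegral.integral_undef (hgt t ht)] at h1
    simpa using h1
  have hlt_mem : ∀ t, 0 ≤ t → t < T₁ → IntervalIntegrable f volume 0 t := by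
    intro t ht htl
    obtain ⟨s, hsS, hts⟩ := exists_lt_of_lt_csSup hSne htl
    exact hsS.2.mono_set
      (by rw [uIcc_of_le ht, uIcc_of_le hsS.1]; exact Icc_subset_Icc le_rfl hts.le)
  obtain ⟨B, hB⟩ := hbnd T₁ hT₁0
  -- integrability on `(0, T₁)`
  have hIoo : IntegrableOn f (Ioo 0 T₁) volume := by
    rcases eq_or_lt_of_le hT₁0 with h0 | h0
    · rw [← h0]
      simp
    · have hunion : Ioo (0:ℝ) T₁ = ⋃ j : ℕ, Ioc 0 (T₁ - T₁ / (j + 2)) := by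
        ext s
        simp only [mem_Ioo, mem_iUnion, mem_Ioc]
        constructor
        · rintro ⟨hs0, hsT⟩
          obtain ⟨j, hj⟩ := exists_nat_gt (T₁ / (T₁ - s))
          refine ⟨j, hs0, ?_⟩
          have h1 : 0 < T₁ - s := by linarith
          rw [div_lt_iff₀ h1] at hj
          have hj2 : T₁ < (j + 2) * (T₁ - s) := by nlinarith [h1]
          have h3 : T₁ / (j + 2) < T₁ - s := by
            rw [div_lt_iff₀ (by positivity)]
            nlinarith [hj2]
          linarith
        · rintro ⟨j, hs0, hsj⟩
          have hpos : 0 < T₁ / (j + 2) := by positivity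
          exact ⟨hs0, by linarith⟩
      have haesm : AEStronglyMeasurable f (volume.restrict (Ioo 0 T₁)) := by
        rw [hunion, aestronglyMeasurable_iUnion_iff]
        intro j
        have hjle : T₁ / ((j:ℝ) + 2) ≤ T₁ / 2 := by
          apply div_le_div_of_nonneg_left h0.le (by norm_num)
          norm_num
        have hjpos : 0 < T₁ / ((j:ℝ) + 2) := by positivity
        have hj1 : 0 ≤ T₁ - T₁ / (j + 2) := by linarith
        have hj2 : T₁ - T₁ / ((j:ℝ) + 2) < T₁ := by linarith
        exact ((intervalIntegrable_iff_integrableOn_Ioc_of_le hj1).1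
          (hlt_mem _ hj1 hj2)).aestronglyMeasurable
      refine Integrable.mono' (g := fun _ => B)
        (integrableOn_const (by rw [Real.volume_Ioo]; exact ENNReal.ofReal_ne_top))
        haesm ?_
      refine (ae_restrict_iff' measurableSet_Ioo).2 (Filter.Eventually.of_forall ?_)
      intro s hs
      exact hB s ⟨hs.1.le, hs.2.le⟩
  have hIocT : IntegrableOn f (Ioc 0 T₁) volume := by
    rwa [IntegrableOn, ← Measure.restrict_congr_set Ioo_ae_eq_Ioc]
  have hII_T : IntervalIntegrable f volume 0 T₁ :=
    (intervalIntegrable_iff_integrableOn_Ioc_of_le hT₁0).2 hIocT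
  have hII2 : IntervalIntegrable f volume T₁ (T₁ + 1) := by
    refine (intervalIntegrable_iff_integrableOn_Ioc_of_le (by linarith)).2 ?_
    have heq : EqOn (fun _ => 𝒢 (x 0)) f (Ioc T₁ (T₁ + 1)) := by
      intro s hs
      simp only [hf]
      rw [hconst s hs.1]
    refine (integrableOn_const
      (by rw [Real.volume_Ioc]; exact ENNReal.ofReal_ne_top)).congr_fun heq
      measurableSet_Ioc
  have hmem : T₁ + 1 ∈ S := ⟨by linarith, hII_T.trans hII2⟩
  linarith [le_csSup hbdd hmem]


section Contraction

open MeasureTheory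

variable {n m k : ℕ} {g : Fin m → EuclideanSpace ℝ (Fin n) → ℝ}
  {H : Fin k → EuclideanSpace ℝ (Fin n)} {c : Fin k → ℝ}
  {F 𝒢 : EuclideanSpace ℝ (Fin n) → EuclideanSpace ℝ (Fin n)}

set_option maxHeartbeats 1000000 in
lemma contraction_main
    (hF : ContDiff ℝ 1 F) (hg : ∀ i, ContDiff ℝ 1 (g i))
    (hgconv : ∀ i, ConvexOn ℝ Set.univ (g i))
    {μ : ℝ} (hμ : 0 < μ)
    (hsmono : ∀ x y : EuclideanSpace ℝ (Fin n), μ * ‖x - y‖ ^ 2 ≤ ⟪x - y, F x - F y⟫)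
    (h𝒢 : ∀ z ∈ constraintSet g H c, IsProjOn (tangentC g H z) (-F z) (𝒢 z))
    {x y : ℝ → EuclideanSpace ℝ (Fin n)}
    (hx : CaraSol 𝒢 (constraintSet g H c) x) (hy : CaraSol 𝒢 (constraintSet g H c) y) :
    ∀ t ≥ (0:ℝ), ‖x t - y t‖ ≤ Real.exp (-μ * t) * ‖x 0 - y 0‖ := by
  have hbnd : ∀ z : ℝ → EuclideanSpace ℝ (Fin n), CaraSol 𝒢 (constraintSet g H c) z →
      ∀ T, 0 ≤ T → ∃ B, ∀ s ∈ Icc (0:ℝ) T, ‖𝒢 (z s)‖ ≤ B := by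
    intro z hz T hT
    obtain ⟨B₀, hB₀⟩ := (isCompact_Icc (a := (0:ℝ)) (b := T)).exists_bound_of_continuousOn
      ((hF.continuous.comp hz.1).norm.continuousOn)
    refine ⟨2 * B₀, fun s hs => ?_⟩
    have h1 : ‖F (z s)‖ ≤ B₀ := by
      have h2 := hB₀ s hs
      rwa [norm_norm] at h2
    calc ‖𝒢 (z s)‖ ≤ 2 * ‖F (z s)‖ := Gnorm_le (h𝒢 _ (hz.2.1 s hs.1))
      _ ≤ 2 * B₀ := by linarith
  have hIx := caraSol_intInt hx.2.2 (hbnd x hx)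
  have hIy := caraSol_intInt hy.2.2 (hbnd y hy)
  set w : ℝ → EuclideanSpace ℝ (Fin n) := fun s => 𝒢 (x s) - 𝒢 (y s) with hw
  have hrestr : ∀ (v : ℝ → EuclideanSpace ℝ (Fin n)),
      (∀ b, 0 ≤ b → IntervalIntegrable v volume 0 b) →
      ∀ a b : ℝ, 0 ≤ a → a ≤ b → IntervalIntegrable v volume a b := by
    intro v hv a b ha hab
    exact (hv b (ha.trans hab)).mono_set
      (by rw [uIcc_of_le hab, uIcc_of_le (ha.trans hab)]; exact Icc_subset_Icc ha le_rfl)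
  have hIw : ∀ a b : ℝ, 0 ≤ a → a ≤ b → IntervalIntegrable w volume a b := by
    intro a b ha hab
    exact (hrestr _ hIx a b ha hab).sub (hrestr _ hIy a b ha hab)
  set u : ℝ → EuclideanSpace ℝ (Fin n) := fun s => x s - y s with hu
  have hucont : Continuous u := hx.1.sub hy.1
  have hdiff : ∀ (v : ℝ → EuclideanSpace ℝ (Fin n)),
      (∀ t ≥ (0:ℝ), v t = v 0 + ∫ s in (0:ℝ)..t, 𝒢 (v s)) →
      (∀ b, 0 ≤ b → IntervalIntegrable (fun s => 𝒢 (v s)) volume 0 b) →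
      ∀ τ z : ℝ, 0 ≤ τ → τ ≤ z → v z - v τ = ∫ s in τ..z, 𝒢 (v s) := by
    intro v hveq hvi τ z hτ hτz
    have hz0 : 0 ≤ z := hτ.trans hτz
    have hadd := intervalIntegral.integral_add_adjacent_intervals (μ := volume)
      (f := fun s => 𝒢 (v s)) (a := 0) (b := τ) (c := z)
      (hvi τ hτ) (hrestr _ hvi τ z hτ hτz)
    rw [hveq z hz0, hveq τ hτ, ← hadd]
    abel
  have hwu : ∀ τ z : ℝ, 0 ≤ τ → τ ≤ z → u z - u τ = ∫ s in τ..z, w s := by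
    intro τ z hτ hτz
    have ex := hdiff x hx.2.2 hIx τ z hτ hτz
    have ey := hdiff y hy.2.2 hIy τ z hτ hτz
    have hsub : u z - u τ = (x z - x τ) - (y z - y τ) := by simp only [hu]; abel
    rw [hsub, ex, ey, ← intervalIntegral.integral_sub (hrestr _ hIx τ z hτ hτz)
      (hrestr _ hIy τ z hτ hτz)]
  intro t ht
  set V : ℝ → ℝ := fun s => ‖u s‖ ^ 2 with hV
  have hVle : ∀ s ∈ Icc (0:ℝ) t, V s ≤ gronwallBound (V 0) (-(2*μ)) 0 (s - 0) := by
    apply le_gronwallBound_of_liminf_deriv_right_le (f' := fun τ => -(2*μ) * V τ)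
    · exact ((hucont.norm).pow 2).continuousOn
    · intro τ hτ r hr
      obtain ⟨Bx, hBx⟩ := hbnd x hx (τ + 1) (by linarith [hτ.1])
      obtain ⟨By, hBy⟩ := hbnd y hy (τ + 1) (by linarith [hτ.1])
      refine dini_step hμ (le_max_left 0 (Bx + By)) hucont
        (fun z hz hz1 => hIw τ z hτ.1 hz)
        (fun z hz hz1 => hwu τ z hτ.1 hz)
        (fun s hs => ?_) (fun s hs => ?_) hr
      · have hs' : s ∈ Icc (0:ℝ) (τ + 1) := ⟨hτ.1.trans hs.1, hs.2⟩
        calc ‖w s‖ ≤ ‖𝒢 (x s)‖ + ‖𝒢 (y s)‖ := norm_sub_le _ _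
          _ ≤ Bx + By := add_le_add (hBx s hs') (hBy s hs')
          _ ≤ max 0 (Bx + By) := le_max_right _ _
      · have hs0 : (0:ℝ) ≤ s := hτ.1.trans hs.1
        exact key_mono hg hgconv hsmono (hx.2.1 s hs0) (hy.2.1 s hs0)
          (h𝒢 _ (hx.2.1 s hs0)) (h𝒢 _ (hy.2.1 s hs0))
    · exact le_refl (V 0)
    · intro τ _
      exact le_of_eq (by ring)
  have hVt := hVle t ⟨ht, le_refl t⟩
  rw [sub_zero, gronwallBound_ε0] at hVt
  have hexp2 : Real.exp (-(2*μ) * t) = Real.exp (-μ * t) ^ 2 := by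
    rw [sq, ← Real.exp_add]
    ring_nf
  have hfin : ‖u t‖ ^ 2 ≤ (Real.exp (-μ * t) * ‖u 0‖) ^ 2 := by
    rw [mul_pow, ← hexp2]
    calc ‖u t‖ ^ 2 = V t := rfl
      _ ≤ V 0 * Real.exp (-(2*μ) * t) := hVt
      _ = Real.exp (-(2*μ) * t) * ‖u 0‖ ^ 2 := by rw [hV]; ring
  have hsq := Real.sqrt_le_sqrt hfin
  rwa [Real.sqrt_sq (norm_nonneg _), Real.sqrt_sq (by positivity)] at hsq

end Contraction


section Existence

variable {n m k : ℕ} {g : Fin m → EuclideanSpace ℝ (Fin n) → ℝ}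
  {H : Fin k → EuclideanSpace ℝ (Fin n)} {c : Fin k → ℝ}
  {F 𝒢 : EuclideanSpace ℝ (Fin n) → EuclideanSpace ℝ (Fin n)}

lemma isClosed_constraintSet (hgc : ∀ i, Continuous (g i)) :
    IsClosed (constraintSet g H c) := by
  have he : constraintSet g H c =
      (⋂ i, {x : EuclideanSpace ℝ (Fin n) | g i x ≤ 0}) ∩
      ⋂ j, {x : EuclideanSpace ℝ (Fin n) | ⟪H j, x⟫ = c j} := by
    ext x
    simp [constraintSet, Set.mem_iInter]
  rw [he]
  refine IsClosed.inter (isClosed_iInter fun i => ?_) (isClosed_iInter fun j => ?_)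
  · exact isClosed_le (hgc i) continuous_const
  · exact isClosed_eq (Continuous.inner continuous_const continuous_id) continuous_const

lemma exists_isProjOn {K : Set (EuclideanSpace ℝ (Fin n))} (hne : K.Nonempty)
    (hcl : IsClosed K) (hconv : Convex ℝ K) (y : EuclideanSpace ℝ (Fin n)) :
    ∃ p, IsProjOn K y p := by
  obtain ⟨v, hv, hveq⟩ := exists_norm_eq_iInf_of_complete_convex hne hcl.isComplete hconv y
  haveI : Nonempty K := hne.to_subtype
  have bdd : BddBelow (Set.range fun w : K => ‖y - (w : EuclideanSpace ℝ (Fin n))‖) := by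
    refine ⟨0, ?_⟩
    rintro _ ⟨w, rfl⟩
    exact norm_nonneg _
  refine ⟨v, hv, fun z hz => ?_⟩
  rw [norm_sub_rev, hveq]
  calc (⨅ w : K, ‖y - (w : EuclideanSpace ℝ (Fin n))‖) ≤ ‖y - z‖ := ciInf_le bdd (⟨z, hz⟩ : K)
    _ = ‖z - y‖ := norm_sub_rev _ _

lemma isProjOn_eq {K : Set (EuclideanSpace ℝ (Fin n))} (hK : Convex ℝ K)
    {y p q : EuclideanSpace ℝ (Fin n)} (h1 : IsProjOn K y p) (h2 : IsProjOn K y q) : p = q := by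
  have a1 := isProjOn_inner_le hK h1 q h2.1
  have a2 := isProjOn_inner_le hK h2 p h1.1
  have e : ⟪y - p, q - p⟫ + ⟪y - q, p - q⟫ = ‖q - p‖ ^ 2 := by
    rw [show p - q = -(q - p) from by abel, inner_neg_right, ← sub_eq_add_neg, ← inner_sub_left,
      show y - p - (y - q) = q - p from by abel, real_inner_self_eq_norm_sq]
  have hsq : ‖q - p‖ ^ 2 ≤ 0 := by rw [← e]; linarith
  have h0 : ‖q - p‖ = 0 := by nlinarith [norm_nonneg (q - p)]
  have := norm_eq_zero.1 h0
  have := sub_eq_zero.1 this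
  exact this.symm

lemma isProjOn_norm_le {K : Set (EuclideanSpace ℝ (Fin n))} (hK : Convex ℝ K)
    {y₁ y₂ p₁ p₂ : EuclideanSpace ℝ (Fin n)} (h1 : IsProjOn K y₁ p₁) (h2 : IsProjOn K y₂ p₂) :
    ‖p₁ - p₂‖ ≤ ‖y₁ - y₂‖ := by
  have a1 := isProjOn_inner_le hK h1 p₂ h2.1
  have a2 := isProjOn_inner_le hK h2 p₁ h1.1
  have e : ⟪y₁ - y₂, p₁ - p₂⟫ - ‖p₁ - p₂‖ ^ 2 = -⟪y₁ - p₁, p₂ - p₁⟫ - ⟪y₂ - p₂, p₁ - p₂⟫ := by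
    rw [show -⟪y₁ - p₁, p₂ - p₁⟫ = ⟪y₁ - p₁, p₁ - p₂⟫ from by
        rw [show p₂ - p₁ = -(p₁ - p₂) from by abel, inner_neg_right]; ring,
      ← real_inner_self_eq_norm_sq, ← inner_sub_left, ← inner_sub_left,
      show y₁ - y₂ - (p₁ - p₂) = y₁ - p₁ - (y₂ - p₂) from by abel]
  have key : ‖p₁ - p₂‖ ^ 2 ≤ ⟪y₁ - y₂, p₁ - p₂⟫ := by linarith
  have hnn := real_inner_le_norm (y₁ - y₂) (p₁ - p₂)
  rcases eq_or_lt_of_le (norm_nonneg (p₁ - p₂)) with h0 | h0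
  · rw [← h0]; exact norm_nonneg _
  · have h3 : ‖p₁ - p₂‖ * ‖p₁ - p₂‖ ≤ ‖y₁ - y₂‖ * ‖p₁ - p₂‖ := by nlinarith
    exact le_of_mul_le_mul_right h3 h0

lemma hasDerivAt_comp_line {f : EuclideanSpace ℝ (Fin n) → ℝ} (hf : ContDiff ℝ 1 f)
    (a v : EuclideanSpace ℝ (Fin n)) :
    HasDerivAt (fun τ : ℝ => f (a + τ • v)) ⟪gradient f a, v⟫ 0 := by
  have hline : HasDerivAt (fun s : ℝ => a + s • v) v 0 := by
    simpa using ((hasDerivAt_id (0:ℝ)).smul_const v).const_add a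
  have hgrad : HasFDerivAt f (InnerProductSpace.toDual ℝ _ (gradient f a))
      ((fun s : ℝ => a + s • v) 0) := by
    simpa using ((hf.differentiable one_ne_zero a).hasGradientAt).hasFDerivAt
  have := hgrad.comp_hasDerivAt 0 hline
  simpa [InnerProductSpace.toDual_apply_apply, Function.comp_def] using this

set_option maxHeartbeats 1000000 in
lemma G_zero_at_sol (hg : ∀ i, ContDiff ℝ 1 (g i))
    (hmfcq : ∀ x ∈ constraintSet g H c, MFCQat g H x)
    (h𝒢 : ∀ z ∈ constraintSet g H c, IsProjOn (tangentC g H z) (-F z) (𝒢 z))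
    {xs : EuclideanSpace ℝ (Fin n)} (hxs : xs ∈ SOL F (constraintSet g H c)) : 𝒢 xs = 0 := by
  have hxsC := hxs.1
  have hinner : ∀ ξ ∈ tangentC g H xs, 0 ≤ ⟪ξ, F xs⟫ := by
    intro ξ hξ
    obtain ⟨-, ξh, hξg, hξH⟩ := hmfcq xs hxsC
    have hstep : ∀ ε : ℝ, 0 < ε → 0 ≤ ⟪ξ, F xs⟫ + ε * ⟪ξh, F xs⟫ := by
      intro ε hε
      set v : EuclideanSpace ℝ (Fin n) := ξ + ε • ξh with hv
      have hall : ∀ i, ∀ᶠ τ in 𝓝[>] (0:ℝ), g i (xs + τ • v) ≤ 0 := by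
        intro i
        rcases lt_or_eq_of_le (hxsC.1 i) with hlt | heq0'
        · have hcont : Continuous (fun τ : ℝ => g i (xs + τ • v)) :=
            (hg i).continuous.comp (by continuity)
          have h0 : Filter.Tendsto (fun τ : ℝ => g i (xs + τ • v)) (𝓝 0) (𝓝 (g i xs)) := by
            have := hcont.tendsto 0
            simpa using this
          have hev := h0.eventually_lt_const hlt
          exact (hev.mono fun τ hτ => hτ.le).filter_mono nhdsWithin_le_nhds
        · have heq0 : g i xs = 0 := heq0'
          have hd : HasDerivAt (fun τ : ℝ => g i (xs + τ • v)) ⟪gradient (g i) xs, v⟫ 0 :=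
            hasDerivAt_comp_line (hg i) xs v
          have hdneg : ⟪gradient (g i) xs, v⟫ < 0 := by
            rw [hv, inner_add_right, inner_smul_right]
            nlinarith [hξ.2 i heq0, hξg i heq0]
          have hslope := (hasDerivAt_iff_tendsto_slope.1 hd).mono_left
            (nhdsWithin_mono (0:ℝ) fun τ hτ => ne_of_gt hτ : 𝓝[>] (0:ℝ) ≤ 𝓝[≠] (0:ℝ))
          have hev := hslope.eventually_lt_const hdneg
          filter_upwards [hev, self_mem_nhdsWithin] with τ hτ1 hτ2
          rw [slope_def_field, sub_zero] at hτ1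
          have hτpos : (0:ℝ) < τ := hτ2
          have hφ0 : g i (xs + (0:ℝ) • v) = 0 := by simpa using heq0
          have hnum : g i (xs + τ • v) - g i (xs + (0:ℝ) • v) < 0 := by
            rcases div_neg_iff.1 hτ1 with ⟨h, _⟩ | ⟨_, h⟩
            · linarith
            · linarith
          rw [hφ0] at hnum
          linarith
      have hmemv : ∀ᶠ τ in 𝓝[>] (0:ℝ), xs + τ • v ∈ constraintSet g H c := by
        filter_upwards [Filter.eventually_all.2 hall] with τ hτ
        refine ⟨hτ, fun j => ?_⟩
        rw [inner_add_right, inner_smul_right, hv, inner_add_right, inner_smul_right,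
          hξ.1 j, hξH j, hxsC.2 j]
        ring
      obtain ⟨τ, hτmem, hτpos⟩ := (hmemv.and self_mem_nhdsWithin).exists
      have hvi := hxs.2 _ hτmem
      rw [show xs + τ • v - xs = τ • v from by abel, real_inner_smul_left] at hvi
      have hτp : (0:ℝ) < τ := hτpos
      have h2 : 0 ≤ ⟪v, F xs⟫ := by nlinarith [hvi, hτp]
      rw [hv, inner_add_left, real_inner_smul_left] at h2
      linarith
    by_contra hneg
    push_neg at hneg
    rcases le_or_gt ⟪ξh, F xs⟫ 0 with hb | hb
    · have := hstep 1 one_pos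
      nlinarith
    · have hεp : 0 < -⟪ξ, F xs⟫ / (2 * ⟪ξh, F xs⟫) := div_pos (by linarith) (by linarith)
      have := hstep _ hεp
      have hbne : ⟪ξh, F xs⟫ ≠ 0 := ne_of_gt hb
      have key : ∀ x b : ℝ, b ≠ 0 → x / (2 * b) * b = x / 2 := by
        intro x b hbb
        field_simp
      have he := key (-⟪ξ, F xs⟫) _ hbne
      rw [he] at this
      linarith
  have h0proj : IsProjOn (tangentC g H xs) (-F xs) 0 := by
    refine ⟨tangentC_zero_mem xs, fun z hz => ?_⟩
    have h1 : ‖z - -F xs‖ ^ 2 = ‖z‖ ^ 2 + 2 * ⟪z, F xs⟫ + ‖F xs‖ ^ 2 := by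
      rw [sub_neg_eq_add, norm_add_sq_real]
    have h2 : ‖(0 : EuclideanSpace ℝ (Fin n)) - -F xs‖ ^ 2 = ‖F xs‖ ^ 2 := by simp
    have h3 : ‖(0 : EuclideanSpace ℝ (Fin n)) - -F xs‖ ^ 2 ≤ ‖z - -F xs‖ ^ 2 := by
      rw [h1, h2]
      nlinarith [hinner z hz, sq_nonneg ‖z‖]
    have h4 := Real.sqrt_le_sqrt h3
    rwa [Real.sqrt_sq (norm_nonneg _), Real.sqrt_sq (norm_nonneg _)] at h4
  exact isProjOn_eq (tangentC_convex xs) (h𝒢 xs hxsC) h0proj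

lemma SOL_unique {μ : ℝ} (hμ : 0 < μ)
    (hsmono : ∀ x y : EuclideanSpace ℝ (Fin n), μ * ‖x - y‖ ^ 2 ≤ ⟪x - y, F x - F y⟫)
    {a b : EuclideanSpace ℝ (Fin n)} (ha : a ∈ SOL F (constraintSet g H c))
    (hb : b ∈ SOL F (constraintSet g H c)) : a = b := by
  have h1 := ha.2 b hb.1
  have h2 := hb.2 a ha.1
  have h3 := hsmono a b
  rw [show b - a = -(a - b) from by abel, inner_neg_left] at h1
  rw [inner_sub_right] at h3
  have hsq : ‖a - b‖ ^ 2 ≤ 0 := by nlinarith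
  have h0 : ‖a - b‖ = 0 := by nlinarith [norm_nonneg (a - b)]
  exact sub_eq_zero.1 (norm_eq_zero.1 h0)

end Existence


section Exist2

open Metric

variable {n m k : ℕ} {g : Fin m → EuclideanSpace ℝ (Fin n) → ℝ}
  {H : Fin k → EuclideanSpace ℝ (Fin n)} {c : Fin k → ℝ}
  {F : EuclideanSpace ℝ (Fin n) → EuclideanSpace ℝ (Fin n)}

set_option maxHeartbeats 1600000 in
lemma exists_SOL (hF : ContDiff ℝ 1 F) (hgc : ∀ i, Continuous (g i))
    (hCconv : Convex ℝ (constraintSet g H c)) (hCne : (constraintSet g H c).Nonempty)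
    {μ : ℝ} (hμ : 0 < μ)
    (hsmono : ∀ x y : EuclideanSpace ℝ (Fin n), μ * ‖x - y‖ ^ 2 ≤ ⟪x - y, F x - F y⟫) :
    ∃ xs, xs ∈ SOL F (constraintSet g H c) := by
  obtain ⟨x₀, hx₀⟩ := hCne
  set R : ℝ := ‖F x₀‖ / μ with hR
  have hR0 : 0 ≤ R := by positivity
  set R₂ : ℝ := R + 1 with hR₂
  set K : Set (EuclideanSpace ℝ (Fin n)) := constraintSet g H c ∩ closedBall x₀ R₂ with hK
  have hx₀K : x₀ ∈ K := ⟨hx₀, mem_closedBall_self (by positivity)⟩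
  have hKne : K.Nonempty := ⟨x₀, hx₀K⟩
  have hKcl : IsClosed K := (isClosed_constraintSet hgc).inter Metric.isClosed_closedBall
  have hKconv : Convex ℝ K := hCconv.inter (convex_closedBall x₀ R₂)
  -- Lipschitz constant for `F` on the ball
  obtain ⟨C₀, hC₀⟩ := (isCompact_closedBall x₀ R₂).exists_bound_of_continuousOn
    (hF.continuous_fderiv one_ne_zero).norm.continuousOn
  have hC₀0 : 0 ≤ C₀ := by
    have := hC₀ x₀ (mem_closedBall_self (by positivity))
    exact le_trans (norm_nonneg _) (by rwa [norm_norm] at this)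
  have hlip : LipschitzOnWith C₀.toNNReal F (closedBall x₀ R₂) := by
    refine (convex_closedBall x₀ R₂).lipschitzOnWith_of_nnnorm_fderiv_le
      (fun z _ => (hF.differentiable one_ne_zero).differentiableAt) (fun z hz => ?_)
    rw [← NNReal.coe_le_coe, coe_nnnorm, Real.coe_toNNReal _ hC₀0]
    have := hC₀ z hz
    rwa [norm_norm] at this
  set L : ℝ := max C₀ μ with hL
  have hμL : μ ≤ L := le_max_right _ _
  have hL0 : 0 < L := lt_of_lt_of_le hμ hμL
  have hFlip : ∀ a ∈ closedBall x₀ R₂, ∀ b ∈ closedBall x₀ R₂, ‖F a - F b‖ ≤ L * ‖a - b‖ := by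
    intro a ha b hb
    have h1 := hlip.dist_le_mul a ha b hb
    rw [dist_eq_norm, dist_eq_norm, Real.coe_toNNReal _ hC₀0] at h1
    calc ‖F a - F b‖ ≤ C₀ * ‖a - b‖ := h1
      _ ≤ L * ‖a - b‖ := mul_le_mul_of_nonneg_right (le_max_left _ _) (norm_nonneg _)
  set γ : ℝ := μ / L ^ 2 with hγ
  have hγ0 : 0 < γ := by positivity
  -- projection onto K
  have hproj : ∀ v : EuclideanSpace ℝ (Fin n), ∃ p, IsProjOn K v p :=
    fun v => exists_isProjOn hKne hKcl hKconv v
  choose P hP using hproj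
  set T : EuclideanSpace ℝ (Fin n) → EuclideanSpace ℝ (Fin n) :=
    fun z => P (z - γ • F z) with hT
  have hTK : ∀ z, T z ∈ K := fun z => (hP _).1
  have hcontr2 : ∀ a ∈ K, ∀ b ∈ K, ‖T a - T b‖ ^ 2 ≤ (1 - μ ^ 2 / L ^ 2) * ‖a - b‖ ^ 2 := by
    intro a ha b hb
    have h1 : ‖T a - T b‖ ≤ ‖(a - γ • F a) - (b - γ • F b)‖ :=
      isProjOn_norm_le hKconv (hP _) (hP _)
    have h2 : (a - γ • F a) - (b - γ • F b) = (a - b) - γ • (F a - F b) := by module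
    have h3 : ‖(a - b) - γ • (F a - F b)‖ ^ 2 =
        ‖a - b‖ ^ 2 - 2 * γ * ⟪a - b, F a - F b⟫ + γ ^ 2 * ‖F a - F b‖ ^ 2 := by
      rw [norm_sub_sq_real, inner_smul_right, norm_smul, Real.norm_eq_abs, abs_of_pos hγ0,
        mul_pow]
      ring
    have h4 : ‖F a - F b‖ ^ 2 ≤ L ^ 2 * ‖a - b‖ ^ 2 := by
      have := hFlip a ha.2 b hb.2
      nlinarith [norm_nonneg (F a - F b), norm_nonneg (a - b)]
    have h5 := hsmono a b
    have h6 : ‖T a - T b‖ ^ 2 ≤ ‖(a - γ • F a) - (b - γ • F b)‖ ^ 2 :=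
      pow_le_pow_left₀ (norm_nonneg _) h1 2
    rw [h2, h3] at h6
    have hγL : γ ^ 2 * L ^ 2 = μ ^ 2 / L ^ 2 := by
      rw [hγ]
      field_simp
    have h7 : γ ^ 2 * ‖F a - F b‖ ^ 2 ≤ μ ^ 2 / L ^ 2 * ‖a - b‖ ^ 2 := by
      rw [← hγL]
      nlinarith [h4, sq_nonneg γ]
    have h8 : 2 * γ * μ * ‖a - b‖ ^ 2 ≤ 2 * γ * ⟪a - b, F a - F b⟫ := by nlinarith [h5, hγ0]
    have hγμ : γ * μ = μ ^ 2 / L ^ 2 := by rw [hγ]; field_simp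
    nlinarith [h6, h7, h8, hγμ]
  have hLL : 0 < 1 - (1 - μ ^ 2 / L ^ 2) := by
    have : 0 < μ ^ 2 / L ^ 2 := by positivity
    linarith
  have hc1 : 0 ≤ 1 - μ ^ 2 / L ^ 2 := by
    have : μ ^ 2 ≤ L ^ 2 := by nlinarith [hμL, hμ.le]
    have h2 : μ ^ 2 / L ^ 2 ≤ 1 := by
      rw [div_le_one (by positivity)]
      exact this
    linarith
  set q : ℝ := Real.sqrt (1 - μ ^ 2 / L ^ 2) with hq
  have hq0 : 0 ≤ q := Real.sqrt_nonneg _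
  have hqsq : q ^ 2 = 1 - μ ^ 2 / L ^ 2 := Real.sq_sqrt hc1
  have hq1 : q < 1 := by nlinarith [hqsq, hq0, hLL]
  have hcontr : ∀ a ∈ K, ∀ b ∈ K, ‖T a - T b‖ ≤ q * ‖a - b‖ := by
    intro a ha b hb
    have h1 := hcontr2 a ha b hb
    have h2 : ‖T a - T b‖ ^ 2 ≤ (q * ‖a - b‖) ^ 2 := by
      rw [mul_pow, hqsq]
      exact h1
    have h3 := Real.sqrt_le_sqrt h2
    rwa [Real.sqrt_sq (norm_nonneg _), Real.sqrt_sq (by positivity)] at h3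
  have hmapsto : Set.MapsTo T K K := fun z _ => hTK z
  have hlipT : LipschitzOnWith q.toNNReal T K := by
    refine LipschitzOnWith.of_dist_le_mul fun a ha b hb => ?_
    rw [dist_eq_norm, dist_eq_norm, Real.coe_toNNReal _ hq0]
    exact hcontr a ha b hb
  have hcw : ContractingWith q.toNNReal (hmapsto.restrict T K K) := by
    constructor
    · rw [← NNReal.coe_lt_coe, Real.coe_toNNReal _ hq0, NNReal.coe_one]
      exact hq1
    · exact hlipT.mapsToRestrict hmapsto
  obtain ⟨xs, hxsK, hfix, -, -⟩ :=
    hcw.exists_fixedPoint' hKcl.isComplete hmapsto hx₀K (edist_ne_top _ _)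
  -- xs solves the VI on K
  have hVIK : ∀ v ∈ K, 0 ≤ ⟪v - xs, F xs⟫ := by
    intro v hv
    have hproj2 : IsProjOn K (xs - γ • F xs) xs := by
      have h1 := hP (xs - γ • F xs)
      rwa [show P (xs - γ • F xs) = xs from hfix] at h1
    have h2 := isProjOn_inner_le hKconv hproj2 v hv
    rw [show xs - γ • F xs - xs = -(γ • F xs) from by abel, inner_neg_left,
      real_inner_smul_left] at h2
    have h3 : 0 ≤ γ * ⟪F xs, v - xs⟫ := by linarith
    have h4 : 0 ≤ ⟪F xs, v - xs⟫ := by nlinarith [h3, hγ0]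
    rwa [real_inner_comm] at h4
  -- a priori bound
  have hball : ‖xs - x₀‖ ≤ R := by
    have h1 := hsmono xs x₀
    have h2 := hVIK x₀ hx₀K
    rw [show x₀ - xs = -(xs - x₀) from by abel, inner_neg_left] at h2
    rw [inner_sub_right] at h1
    have h5 : -⟪xs - x₀, F x₀⟫ ≤ ‖xs - x₀‖ * ‖F x₀‖ := by
      have := abs_real_inner_le_norm (xs - x₀) (F x₀)
      have h6 := (abs_le.1 this).1
      linarith
    have h6 : μ * ‖xs - x₀‖ ^ 2 ≤ ‖xs - x₀‖ * ‖F x₀‖ := by linarith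
    rcases eq_or_lt_of_le (norm_nonneg (xs - x₀)) with h7 | h7
    · rw [← h7]; exact hR0
    · rw [hR, le_div_iff₀ hμ]
      nlinarith [h6, h7]
  refine ⟨xs, hxsK.1, fun v hv => ?_⟩
  set t : ℝ := 1 / (‖v - xs‖ + 1) with htd
  have ht0 : 0 < t := by positivity
  have ht1 : t ≤ 1 := by
    rw [htd, div_le_one (by positivity)]
    linarith [norm_nonneg (v - xs)]
  have hvt : xs + t • (v - xs) ∈ K := by
    constructor
    · have hcomb := hCconv hxsK.1 hv (by linarith : (0:ℝ) ≤ 1 - t) ht0.le (by ring)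
      have he : (1 - t) • xs + t • v = xs + t • (v - xs) := by module
      rwa [he] at hcomb
    · rw [mem_closedBall, dist_eq_norm, show xs + t • (v - xs) - x₀ = (xs - x₀) + t • (v - xs)
        from by abel]
      have h8 : ‖t • (v - xs)‖ ≤ 1 := by
        rw [norm_smul, Real.norm_eq_abs, abs_of_pos ht0, htd]
        rw [div_mul_eq_mul_div, div_le_one (by positivity)]
        linarith [norm_nonneg (v - xs)]
      calc ‖(xs - x₀) + t • (v - xs)‖ ≤ ‖xs - x₀‖ + ‖t • (v - xs)‖ := norm_add_le _ _
        _ ≤ R + 1 := add_le_add hball h8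
  have h9 := hVIK _ hvt
  rw [show xs + t • (v - xs) - xs = t • (v - xs) from by abel, real_inner_smul_left] at h9
  nlinarith [h9, ht0]

end Exist2

/-- Contraction of the projected monotone flow under μ-strong
monotonicity: any two Carathéodory solutions remaining in `C` approach each other at
exponential rate `μ`; in particular there is a unique `x* ∈ SOL(F,C)`, and it is
globally exponentially stable relative to `C`. -/
theorem statement3 {n m k : ℕ}
    (F : EuclideanSpace ℝ (Fin n) → EuclideanSpace ℝ (Fin n))
    (g : Fin m → EuclideanSpace ℝ (Fin n) → ℝ)
    (H : Fin k → EuclideanSpace ℝ (Fin n)) (c : Fin k → ℝ)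
    (hF : ContDiff ℝ 1 F) (hg : ∀ i, ContDiff ℝ 1 (g i))
    (hgconv : ∀ i, ConvexOn ℝ Set.univ (g i))
    (hCconv : Convex ℝ (constraintSet g H c))
    (hCne : (constraintSet g H c).Nonempty)
    (hmfcq : ∀ x ∈ constraintSet g H c, MFCQat g H x)
    (μ : ℝ) (hμ : 0 < μ)
    (hsmono : ∀ x y : EuclideanSpace ℝ (Fin n), μ * ‖x - y‖ ^ 2 ≤ ⟪x - y, F x - F y⟫)
    (𝒢 : EuclideanSpace ℝ (Fin n) → EuclideanSpace ℝ (Fin n))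
    (h𝒢 : ∀ x ∈ constraintSet g H c, IsProjOn (tangentC g H x) (-F x) (𝒢 x)) :
    -- contraction at rate μ between any two solutions remaining in `C`
    ((∀ x y : ℝ → EuclideanSpace ℝ (Fin n),
        CaraSol 𝒢 (constraintSet g H c) x → CaraSol 𝒢 (constraintSet g H c) y →
        ∀ t ≥ (0:ℝ), ‖x t - y t‖ ≤ Real.exp (-μ * t) * ‖x 0 - y 0‖) ∧
    -- the solution of `VI(F,C)` is unique
      (∃! xs, xs ∈ SOL F (constraintSet g H c)) ∧
    -- and globally exponentially stable relative to `C`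
      (∀ xs ∈ SOL F (constraintSet g H c),
        ∀ x : ℝ → EuclideanSpace ℝ (Fin n), CaraSol 𝒢 (constraintSet g H c) x →
          ∀ t ≥ (0:ℝ), ‖x t - xs‖ ≤ Real.exp (-μ * t) * ‖x 0 - xs‖)) := by
  have part1 : ∀ x y : ℝ → EuclideanSpace ℝ (Fin n),
      CaraSol 𝒢 (constraintSet g H c) x → CaraSol 𝒢 (constraintSet g H c) y →
      ∀ t ≥ (0:ℝ), ‖x t - y t‖ ≤ Real.exp (-μ * t) * ‖x 0 - y 0‖ :=
    fun x y hx hy => contraction_main hF hg hgconv hμ hsmono h𝒢 hx hy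
  obtain ⟨xs, hxs⟩ := exists_SOL hF (fun i => (hg i).continuous) hCconv hCne hμ hsmono
  refine ⟨part1, ⟨xs, hxs, fun y hy => SOL_unique hμ hsmono hy hxs⟩, ?_⟩
  intro zs hzs x hx t ht
  have hz0 : 𝒢 zs = 0 := G_zero_at_sol hg hmfcq h𝒢 hzs
  have hconst : CaraSol 𝒢 (constraintSet g H c) (fun _ => zs) :=
    ⟨continuous_const, fun s _ => hzs.1, fun s _ => by simp [hz0]⟩
  exact part1 x (fun _ => zs) hx hconst t ht


end
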